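/- Let n ≥ 1 and let c₁,…,cₙ be complex numbers. Let M be the ordered product of 2×2 matrices M = [[0, c₁], [−1, 1]] · [[0, c₂], [−1, 1]] ⋯ [[0, cₙ], [−1, 1]]. Then det(M) = c₁c₂⋯cₙ and tr(M) = Σ_{k=0}^{⌊n/2⌋} (−1)^k F_k(c), where F_k(c) = Σ_{I cyclically sparse, |I|=k} ∏_{i∈I} c_i. -/

import Mathlib

/-- A subset `I` of `ℤ/nℤ` is cyclically sparse if it contains no pair of
cyclically consecutive indices `i, i+1`. -/
def CyclicallySparse {n : ℕ} (I : Finset (ZMod n)) : Prop :=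
  ∀ i ∈ I, i + 1 ∉ I

instance {n : ℕ} (I : Finset (ZMod n)) : Decidable (CyclicallySparse I) := by
  unfold CyclicallySparse; infer_instance

/-- `F k c = Σ_{I cyclically sparse, |I| = k} ∏_{i ∈ I} c i`. -/
noncomputable def sparseSum (n : ℕ) [NeZero n] (c : ZMod n → ℂ) (k : ℕ) : ℂ :=
  ∑ I ∈ Finset.univ.filter
      (fun I : Finset (ZMod n) => CyclicallySparse I ∧ I.card = k),
    ∏ i ∈ I, c i

/-! The determinant is multiplicative. For the trace, expanding the matrix product writes
`tr M` as a sum over closed index paths `t : ℤ/nℤ → {0, 1}` of `∏ⱼ (Mⱼ)_{t j, t (j+1)}`.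
Encode a path by its zero set `I`. The `(0,0)` entry vanishes, so only cyclically sparse `I`
contribute; for those, every `j ∈ I` contributes `c j` and every `j` with `j + 1 ∈ I`
contributes `-1`, so the path contributes `(-1)^|I| ∏_{i ∈ I} c i`. A cyclically sparse set
and its translate by `1` are disjoint, so `|I| ≤ n/2`, and grouping by `|I|` gives the sum. -/

open Matrix Finset

theorem Fin.sum_univ_fun_succ {α M : Type*} [Fintype α] [AddCommMonoid M] {n : ℕ}
    (g : (Fin (n + 1) → α) → M) :
    ∑ p, g p = ∑ a, ∑ q : Fin n → α, g (Fin.cons a q) := by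
  rw [← Fintype.sum_prod_type', ← (Fin.consEquiv fun _ => α).sum_comp]
  rfl

theorem Fin.snoc_eq_cons_add_one {α : Type*} {n : ℕ} (p : Fin n → α) (a : α)
    (i : Fin (n + 1)) :
    Fin.snoc (α := fun _ => α) p a i = Fin.cons (α := fun _ => α) a p (i + 1) := by
  induction i using Fin.lastCases with
  | last => simp
  | cast j => rw [Fin.coeSucc_eq_succ]; simp

open Fin.CommRing in
theorem ZMod.finEquiv_apply {n : ℕ} [NeZero n] (i : Fin n) : ZMod.finEquiv n i = (i : ℕ) := by
  conv_lhs => rw [← Fin.cast_val_eq_self i]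
  exact map_natCast (ZMod.finEquiv n) _

theorem ZMod.prod_fin_natCast {M : Type*} [CommMonoid M] {n : ℕ} [NeZero n] (f : ZMod n → M) :
    ∏ i : Fin n, f (i : ℕ) = ∏ j, f j :=
  Fintype.prod_equiv (ZMod.finEquiv n).toEquiv _ _ fun i => by
    simp [ZMod.finEquiv_apply]

section PathExpansion
variable {ι R : Type*} [Fintype ι] [DecidableEq ι] [CommSemiring R]

theorem list_ofFn_prod_apply {n : ℕ} (f : Fin (n + 1) → Matrix ι ι R) (a b : ι) :
    (List.ofFn f).prod a b =
      ∑ p : Fin n → ι,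
        ∏ i, f i (Fin.cons (α := fun _ => ι) a p i) (Fin.snoc (α := fun _ => ι) p b i) := by
  induction n generalizing a with
  | zero => simp; rfl
  | succ n ih =>
    rw [List.ofFn_succ, List.prod_cons, mul_apply, Fin.sum_univ_fun_succ]
    refine sum_congr rfl fun x _ => ?_
    rw [ih, mul_sum]
    refine sum_congr rfl fun p _ => ?_
    rw [← Fin.cons_snoc_eq_snoc_cons, Fin.prod_univ_succ (n := n + 1)]
    simp

theorem trace_list_ofFn_prod {n : ℕ} [NeZero n] (f : Fin n → Matrix ι ι R) :
    trace (List.ofFn f).prod = ∑ p : Fin n → ι, ∏ i, f i (p i) (p (i + 1)) := by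
  obtain ⟨m, rfl⟩ := Nat.exists_eq_succ_of_ne_zero (NeZero.ne n)
  simp only [trace, Matrix.diag, list_ofFn_prod_apply, Fin.snoc_eq_cons_add_one,
    Fin.sum_univ_fun_succ (n := m)]

open Fin.CommRing in
theorem trace_list_ofFn_prod_zmod {n : ℕ} [NeZero n] (A : ZMod n → Matrix ι ι R) :
    trace (List.ofFn fun i : Fin n => A (i : ℕ)).prod =
      ∑ t : ZMod n → ι, ∏ j, A j (t j) (t (j + 1)) := by
  set e : Fin n ≃ ZMod n := (ZMod.finEquiv n).toEquiv
  have he : ∀ i, e i = (i : ℕ) := ZMod.finEquiv_apply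
  have he_succ : ∀ i, e (i + 1) = e i + 1 := fun i => by
    simp only [e, RingEquiv.toEquiv_eq_coe, RingEquiv.coe_toEquiv, map_add, map_one]
  rw [trace_list_ofFn_prod]
  refine Fintype.sum_equiv (e.arrowCongr (Equiv.refl ι)) _ _ fun p => ?_
  rw [← e.prod_comp]
  refine prod_congr rfl fun i _ => ?_
  simp [← he, ← he_succ]

end PathExpansion

theorem det_list_ofFn_prod {ι R : Type*} [Fintype ι] [DecidableEq ι] [CommRing R] {n : ℕ}
    (f : Fin n → Matrix ι ι R) : det (List.ofFn f).prod = ∏ i, det (f i) := by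
  rw [← coe_detMonoidHom, map_list_prod, List.map_ofFn, List.prod_ofFn]
  rfl

def Finset.equivFunFinTwo (α : Type*) [Fintype α] [DecidableEq α] :
    Finset α ≃ (α → Fin 2) where
  toFun I j := if j ∈ I then 0 else 1
  invFun t := {j | t j = 0}
  left_inv I := by ext; simp
  right_inv t := by funext j; by_cases h : t j = 0 <;> simp [h, Fin.eq_one_of_ne_zero]

section Monodromy
variable {R : Type*} [CommRing R] {n : ℕ} [NeZero n]

theorem prod_monodromy_entries_of_cyclicallySparse (c : ZMod n → R) {I : Finset (ZMod n)}
    (hI : CyclicallySparse I) :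
    ∏ j, !![0, c j; -1, 1] (Finset.equivFunFinTwo _ I j) (Finset.equivFunFinTwo _ I (j + 1)) =
      (-1) ^ #I * ∏ i ∈ I, c i := by
  calc _ = ∏ j, (if j ∈ I then c j else 1) * (if j + 1 ∈ I then -1 else 1) := by
        refine prod_congr rfl fun j _ => ?_
        by_cases hj : j ∈ I
        · simp [Finset.equivFunFinTwo, hj, hI j hj]
        · by_cases hj' : j + 1 ∈ I <;> simp [Finset.equivFunFinTwo, hj, hj']
    _ = (∏ i ∈ I, c i) * ∏ j, if j ∈ I then -1 else 1 := by
        rw [prod_mul_distrib, Fintype.prod_ite_mem]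
        exact congrArg _ (Equiv.prod_comp (Equiv.addRight 1) fun j => if j ∈ I then -1 else 1)
    _ = _ := by rw [Fintype.prod_ite_mem, prod_const, mul_comm]

theorem prod_monodromy_entries_of_not_cyclicallySparse (c : ZMod n → R) {I : Finset (ZMod n)}
    (hI : ¬ CyclicallySparse I) :
    ∏ j, !![0, c j; -1, 1] (Finset.equivFunFinTwo _ I j) (Finset.equivFunFinTwo _ I (j + 1)) =
      0 := by
  obtain ⟨j, hj, hj'⟩ : ∃ j ∈ I, j + 1 ∈ I := by simpa [CyclicallySparse] using hI
  exact prod_eq_zero (mem_univ j) (by simp [Finset.equivFunFinTwo, hj, hj'])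

theorem sum_prod_monodromy_entries (c : ZMod n → R) :
    ∑ t : ZMod n → Fin 2, ∏ j, !![0, c j; -1, 1] (t j) (t (j + 1)) =
      ∑ I with CyclicallySparse I, (-1) ^ #I * ∏ i ∈ I, c i := by
  rw [← (Finset.equivFunFinTwo _).sum_comp, sum_filter]
  refine sum_congr rfl fun I _ => ?_
  split_ifs with hI
  · exact prod_monodromy_entries_of_cyclicallySparse c hI
  · exact prod_monodromy_entries_of_not_cyclicallySparse c hI

end Monodromy

theorem CyclicallySparse.card_le_half {n : ℕ} [NeZero n] {I : Finset (ZMod n)}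
    (hI : CyclicallySparse I) :
    #I ≤ n / 2 := by
  have hdisj : Disjoint I (I.map (Equiv.addRight 1).toEmbedding) := by
    simpa [disjoint_left] using fun i hi h => hI _ h (by simpa using hi)
  have := card_le_univ (I ∪ I.map (Equiv.addRight 1).toEmbedding)
  rw [card_union_of_disjoint hdisj, card_map, ZMod.card] at this
  omega

theorem sum_cyclicallySparse_eq_sum_sparseSum {n : ℕ} [NeZero n] (c : ZMod n → ℂ) :
    ∑ I with CyclicallySparse I, (-1) ^ #I * ∏ i ∈ I, c i =
      ∑ k ∈ range (n / 2 + 1), (-1) ^ k * sparseSum n c k := by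
  rw [← sum_fiberwise_of_maps_to (g := card) (t := range (n / 2 + 1))
    fun I hI => mem_range_succ_iff.mpr (mem_filter.mp hI).2.card_le_half]
  refine sum_congr rfl fun k _ => ?_
  rw [sparseSum, mul_sum, filter_filter]
  exact sum_congr rfl fun I hI => by rw [(mem_filter.mp hI).2.2]

theorem det_and_trace_monodromy_general (n : ℕ) [NeZero n]
    (c : ZMod n → ℂ) :
    ((List.ofFn fun i : Fin n =>
        !![(0 : ℂ), c ((i : ℕ) : ZMod n); -1, 1]).prod).det = (∏ i : ZMod n, c i) ∧
    Matrix.trace ((List.ofFn fun i : Fin n =>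
        !![(0 : ℂ), c ((i : ℕ) : ZMod n); -1, 1]).prod) =
      ∑ k ∈ Finset.range (n / 2 + 1), (-1 : ℂ) ^ k * sparseSum n c k := by
  constructor
  · simp only [det_list_ofFn_prod, det_fin_two_of, mul_neg, mul_one, zero_sub, neg_neg]
    exact ZMod.prod_fin_natCast c
  · rw [trace_list_ofFn_prod_zmod fun j => !![(0 : ℂ), c j; -1, 1], sum_prod_monodromy_entries,
      sum_cyclicallySparse_eq_sum_sparseSum]

/-- For the monodromy matrix `M = [[0,c₁],[-1,1]] ⋯ [[0,cₙ],[-1,1]]` one has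
`det M = c₁⋯cₙ` and `tr M = Σ_{k=0}^{⌊n/2⌋} (-1)^k F_k(c)`. -/
theorem det_and_trace_monodromy (n : ℕ) [NeZero n] (hn : 1 ≤ n)
    (c : ZMod n → ℂ) :
    ((List.ofFn fun i : Fin n =>
        !![(0 : ℂ), c ((i : ℕ) : ZMod n); -1, 1]).prod).det = (∏ i : ZMod n, c i) ∧
    Matrix.trace ((List.ofFn fun i : Fin n =>
        !![(0 : ℂ), c ((i : ℕ) : ZMod n); -1, 1]).prod) =
      ∑ k ∈ Finset.range (n / 2 + 1), (-1 : ℂ) ^ k * sparseSum n c k :=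
  det_and_trace_monodromy_general n c
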